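/- arXiv:1005.3445 — 2 statements merged into one kernel-verified Lean document; each statement's English description precedes it below -/
import Mathlib

section
/- Let g ∈ SL_d(k) with Cartan decomposition g = k(g)a(g)u(g), and set v_g = [k(g)e_1] ∈ P(V) and H_g = [span(u(g)^{-1}e_2, …, u(g)^{-1}e_d)]. Let 0 < ε < 1 and suppose |a_2(g)/a_1(g)| ≤ ε². Then for every [x] ∈ P(V) with δ([x], H_g) > ε one has δ(g·[x], v_g) ≤ (|a_2(g)|/|a_1(g)|) / δ([x], H_g) < ε. In particular, [g] is ε-contracting with attracting point v_g and repelling hyperplane H_g. -/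
open MeasureTheory ProbabilityTheory Filter Matrix
open scoped ENNReal

noncomputable section

/-- The absolute value of `k` is non-archimedean (ultrametric). -/
def IsNonarch (k : Type*) [NormedField k] : Prop := ∀ a b : k, ‖a + b‖ ≤ max ‖a‖ ‖b‖

variable {k : Type*} [NontriviallyNormedField k] {d : ℕ}

open Classical in
/-- The canonical norm on `k^ι`: the Euclidean/Hermitian norm in the archimedean
case, the max norm in the non-archimedean case. -/
def vnorm {ι : Type*} [Fintype ι] (x : ι → k) : ℝ :=
  if IsNonarch k then ⨆ i, ‖x i‖ else Real.sqrt (∑ i, ‖x i‖ ^ 2)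

/-- The operator norm on matrices induced by the canonical norm. -/
def mnorm {ι : Type*} [Fintype ι] (g : Matrix ι ι k) : ℝ :=
  sSup ((fun x => vnorm (g.mulVec x)) '' {x : ι → k | vnorm x = 1})

open Classical in
/-- The norm of `x ∧ y` in `Λ² k^d`. -/
def wnorm (x y : Fin d → k) : ℝ :=
  if IsNonarch k then ⨆ p : Fin d × Fin d, ‖x p.1 * y p.2 - x p.2 * y p.1‖
  else Real.sqrt (∑ p : Fin d × Fin d,
    if p.1 < p.2 then ‖x p.1 * y p.2 - x p.2 * y p.1‖ ^ 2 else 0)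

/-- The Fubini–Study distance between the directions of two nonzero vectors:
`δ([x],[y]) = ‖x ∧ y‖ / (‖x‖ ‖y‖)`. -/
def pdist (x y : Fin d → k) : ℝ := wnorm x y / (vnorm x * vnorm y)

/-- `δ([x], H)` where `H = ker f` and the linear form `f` has coordinate vector `c`
in the dual basis; equals `|f x| / (‖f‖ ‖x‖)` (the dual norm of `f` being the
canonical norm of its coordinate vector `c`). -/
def pdistH (x c : Fin d → k) : ℝ := ‖∑ i, c i * x i‖ / (vnorm c * vnorm x)

/-- The special linear group `SL_d(k)`. -/
abbrev SLgp (d : ℕ) (k : Type*) [Field k] := Matrix.SpecialLinearGroup (Fin d) k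

instance {m : Type*} [Fintype m] [MeasurableSpace k] : MeasurableSpace (Matrix m m k) :=
  inferInstanceAs (MeasurableSpace (m → m → k))
instance : TopologicalSpace (SLgp d k) :=
  inferInstanceAs (TopologicalSpace {A : Matrix (Fin d) (Fin d) k // A.det = 1})
instance [MeasurableSpace k] : MeasurableSpace (SLgp d k) :=
  inferInstanceAs (MeasurableSpace {A : Matrix (Fin d) (Fin d) k // A.det = 1})
instance : TopologicalSpace (Projectivization k (Fin d → k)) :=
  instTopologicalSpaceQuotient
instance [MeasurableSpace k] : MeasurableSpace (Projectivization k (Fin d → k)) :=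
  Quotient.instMeasurableSpace

lemma slInjective (g : SLgp d k) :
    Function.Injective ((g : Matrix (Fin d) (Fin d) k).mulVecLin) := by
  intro x y h
  simp only [Matrix.mulVecLin_apply] at h
  have h2 := congrArg (fun v => ((g⁻¹ : SLgp d k) : Matrix (Fin d) (Fin d) k).mulVec v) h
  simpa [Matrix.mulVec_mulVec, Matrix.adjugate_mul,
    Matrix.SpecialLinearGroup.det_coe] using h2

lemma slTransposeInjective (g : SLgp d k) :
    Function.Injective (((g : Matrix (Fin d) (Fin d) k))ᵀ.mulVecLin) := by
  intro x y h
  simp only [Matrix.mulVecLin_apply] at h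
  have h2 := congrArg
    (fun v => (((g⁻¹ : SLgp d k) : Matrix (Fin d) (Fin d) k))ᵀ.mulVec v) h
  simpa [Matrix.mulVec_mulVec, ← Matrix.transpose_mul, Matrix.mul_adjugate,
    Matrix.SpecialLinearGroup.det_coe] using h2

lemma sl_mulVec_ne_zero (g : SLgp d k) {x : Fin d → k} (hx : x ≠ 0) :
    (g : Matrix (Fin d) (Fin d) k).mulVec x ≠ 0 := by
  intro h
  apply hx
  apply slInjective g
  simpa [Matrix.mulVecLin_apply] using h

/-- The action of `SL_d(k)` on the projective space `P(k^d)`. -/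
def pact (g : SLgp d k) :
    Projectivization k (Fin d → k) → Projectivization k (Fin d → k) :=
  Projectivization.map ((g : Matrix (Fin d) (Fin d) k).mulVecLin) (slInjective g)

/-- The action of `SL_d(k)` on the projective space of the dual `P((k^d)^*)`,
where linear forms are identified with their coordinate vectors in the dual basis:
`g · f = f ∘ g⁻¹` corresponds to `c ↦ (g⁻¹)ᵀ c`. -/
def pactDual (g : SLgp d k) :
    Projectivization k (Fin d → k) → Projectivization k (Fin d → k) :=
  Projectivization.map (((g⁻¹ : SLgp d k) : Matrix (Fin d) (Fin d) k))ᵀ.mulVecLin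
    (slTransposeInjective g⁻¹)

/-- Fubini–Study distance on the projective space. -/
def pdelta (P Q : Projectivization k (Fin d → k)) : ℝ := pdist P.rep Q.rep

/-- Distance from a point of projective space to the projective hyperplane defined
by the linear form with coordinate vector `c`. -/
def pdeltaH (P : Projectivization k (Fin d → k)) (c : Fin d → k) : ℝ := pdistH P.rep c

/-- The topological support of a measure. -/
def measSupport {G : Type*} [TopologicalSpace G] [MeasurableSpace G]
    (μ : Measure G) : Set G :=
  {g | ∀ U : Set G, IsOpen U → g ∈ U → μ U ≠ 0}

/-- The smallest closed subsemigroup containing a set. -/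
def smallestClosedSemigroup {G : Type*} [TopologicalSpace G] [Mul G] (A : Set G) :
    Set G :=
  ⋂₀ {S : Set G | A ⊆ S ∧ IsClosed S ∧ ∀ a ∈ S, ∀ b ∈ S, a * b ∈ S}

/-- `Γ_μ`: the smallest closed subsemigroup containing the support of `μ`. -/
def GammaMu {G : Type*} [TopologicalSpace G] [MeasurableSpace G] [Mul G]
    (μ : Measure G) : Set G :=
  smallestClosedSemigroup (measSupport μ)

/-- A set of matrices acts strongly irreducibly: no finite union of nonzero proper
subspaces is invariant. -/
def StronglyIrred (Γ : Set (SLgp d k)) : Prop :=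
  ∀ F : Finset (Submodule k (Fin d → k)), F.Nonempty → (∀ W ∈ F, W ≠ ⊥ ∧ W ≠ ⊤) →
    ¬ (∀ g ∈ Γ, ∀ x : Fin d → k, (∃ W ∈ F, x ∈ W) →
        ∃ W' ∈ F, (g : Matrix (Fin d) (Fin d) k).mulVec x ∈ W')

/-- There are `γ_n ∈ Γ` and `r_n ∈ k` with `‖r_n γ_n‖ = 1` such that `r_n γ_n`
converges to a rank `p` endomorphism. -/
def HasIndexSeq (Γ : Set (SLgp d k)) (p : ℕ) : Prop :=
  ∃ (γ : ℕ → SLgp d k) (r : ℕ → k) (A : Matrix (Fin d) (Fin d) k),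
    (∀ n, γ n ∈ Γ) ∧
    (∀ n, mnorm (r n • ((γ n : Matrix (Fin d) (Fin d) k))) = 1) ∧
    Tendsto (fun n => r n • ((γ n : Matrix (Fin d) (Fin d) k))) atTop (nhds A) ∧
    A.rank = p

/-- `Γ` is contracting: some subsequence of some normalized sequence of `Γ`
converges to a rank-one endomorphism. -/
def ContractingSet (Γ : Set (SLgp d k)) : Prop :=
  ∃ (γ : ℕ → SLgp d k) (r : ℕ → k) (φ : ℕ → ℕ) (A : Matrix (Fin d) (Fin d) k),
    (∀ n, γ n ∈ Γ) ∧
    (∀ n, mnorm (r n • ((γ n : Matrix (Fin d) (Fin d) k))) = 1) ∧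
    StrictMono φ ∧
    Tendsto (fun n => r (φ n) • ((γ (φ n) : Matrix (Fin d) (Fin d) k))) atTop (nhds A) ∧
    A.rank = 1

/-- `μ` has an exponential (local) moment: `∫ ‖g‖^τ dμ(g) < ∞` for some `τ > 0`. -/
def ExpLocalMoment [MeasurableSpace k] (μ : Measure (SLgp d k)) : Prop :=
  ∃ τ : ℝ, 0 < τ ∧
    ∫⁻ g, ENNReal.ofReal (mnorm ((g : Matrix (Fin d) (Fin d) k)) ^ τ) ∂μ < ⊤

/-- `ν` is invariant for the measure `m` and the action `act`:
`∫∫ φ(g·a) dm(g) dν(a) = ∫ φ dν` for all bounded Borel `φ`. -/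
def InvariantMeasure {α G : Type*} [MeasurableSpace α] [MeasurableSpace G]
    (m : Measure G) (act : G → α → α) (ν : Measure α) : Prop :=
  ∀ φ : α → ℝ, Measurable φ → (∃ C, ∀ a, |φ a| ≤ C) →
    ∫ g, ∫ a, φ (act g a) ∂ν ∂m = ∫ a, φ a ∂ν

/-- The right random walk `M_n = X_1 ⋯ X_n`. -/
def Mword {Ω G : Type*} [Monoid G] (X : ℕ → Ω → G) (n : ℕ) (ω : Ω) : G :=
  ((List.range n).map fun i => X (i + 1) ω).prod

/-- The left random walk `S_n = X_n ⋯ X_1`. -/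
def Sword {Ω G : Type*} [Monoid G] (X : ℕ → Ω → G) (n : ℕ) (ω : Ω) : G :=
  ((List.range n).map fun i => X (n - i) ω).prod

/-- The second compound matrix: the matrix of the induced map on `Λ² k^d`,
whose entries are the `2 × 2` minors. -/
def comp2 (g : Matrix (Fin d) (Fin d) k) :
    Matrix {p : Fin d × Fin d // p.1 < p.2} {p : Fin d × Fin d // p.1 < p.2} k :=
  Matrix.of fun p q =>
    g p.1.1 q.1.1 * g p.1.2 q.1.2 - g p.1.1 q.1.2 * g p.1.2 q.1.1

/-- The maximal compact group `K`: the elements of `SL_d(k)` acting by isometries of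
the canonical norm (this is `SO_d(ℝ)`, `SU_d(ℂ)`, resp. `SL_d(O_k)`). -/
def Kiso (d : ℕ) (k : Type*) [NontriviallyNormedField k] : Set (SLgp d k) :=
  {g | ∀ x : Fin d → k, vnorm ((g : Matrix (Fin d) (Fin d) k).mulVec x) = vnorm x}

end

noncomputable section
variable {k : Type*} [NontriviallyNormedField k] {d : ℕ}

lemma single_one_ne_zero (i : Fin d) : (Pi.single i (1 : k) : Fin d → k) ≠ 0 := by
  intro h
  have h2 : (1 : k) = 0 := by simpa using congrFun h i
  exact one_ne_zero h2

/-- `[g]` is `ε`-contracting with attracting point `v` and repelling hyperplane the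
kernel of the form with coordinate vector `c`. -/
def EpsContractingSL (g : SLgp d k) (v : Projectivization k (Fin d → k))
    (c : Fin d → k) (ε : ℝ) : Prop :=
  ∀ Q : Projectivization k (Fin d → k), ε < pdeltaH Q c → pdelta (pact g Q) v < ε

end

/-!
Write `g = κ a u` for the Cartan decomposition and `y = u x`. Since `κ` and `u` are isometries,
`‖g x‖ ≥ |a₁| |y₁|`, while `g x ∧ κ e₁ = κ (a y - a₁ y₁ e₁) ∧ κ e₁` has norm at most
`‖a y - a₁ y₁ e₁‖ ≤ |a₂| ‖x‖`. As `|y₁| = δ([x], H_g) ‖x‖ ‖u⁻¹ e₁^*‖` and this dual norm is at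
least `1`, we get `δ(g[x], v_g) ≤ |a₂/a₁| / δ([x], H_g) ≤ ε² / ε`.

In the archimedean case `κ` is only known to preserve the Euclidean norm and the field carries no
conjugation; the bound `‖κ w ∧ κ e₁‖ ≤ ‖w‖` for `w₁ = 0` comes from Lagrange's identity for the
pair `(κ w, κ e₁)`, which follows from the Pythagorean relation
`‖α κ w + β κ e₁‖² = |α|² ‖w‖² + |β|²` alone.
-/

section VNorm

variable {k : Type*} [NontriviallyNormedField k] {ι : Type*} [Fintype ι]

lemma vnorm_nonneg (x : ι → k) : 0 ≤ vnorm x := by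
  unfold vnorm
  split_ifs
  · exact Real.iSup_nonneg fun i => norm_nonneg _
  · exact Real.sqrt_nonneg _

lemma norm_le_vnorm (x : ι → k) (i : ι) : ‖x i‖ ≤ vnorm x := by
  unfold vnorm
  split_ifs
  · exact le_ciSup (f := fun j => ‖x j‖) (Set.finite_range _).bddAbove i
  · rw [← Real.sqrt_sq (norm_nonneg (x i))]
    exact Real.sqrt_le_sqrt
      (Finset.single_le_sum (fun j _ => sq_nonneg ‖x j‖) (Finset.mem_univ i))

lemma vnorm_smul (a : k) (x : ι → k) : vnorm (a • x) = ‖a‖ * vnorm x := by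
  unfold vnorm
  split_ifs
  · rw [Real.mul_iSup_of_nonneg (norm_nonneg a)]
    simp only [Pi.smul_apply, smul_eq_mul, norm_mul]
  · rw [← Real.sqrt_sq (norm_nonneg a), ← Real.sqrt_mul (sq_nonneg _), Finset.mul_sum]
    simp only [Pi.smul_apply, smul_eq_mul, norm_mul, mul_pow]

lemma sq_vnorm_of_not_isNonarch (hna : ¬ IsNonarch k) (x : ι → k) :
    vnorm x ^ 2 = ∑ i, ‖x i‖ ^ 2 := by
  unfold vnorm
  rw [if_neg hna, Real.sq_sqrt (Finset.sum_nonneg fun i _ => sq_nonneg _)]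

lemma vnorm_single [DecidableEq ι] (i : ι) : vnorm (Pi.single i (1 : k)) = 1 := by
  refine le_antisymm ?_ (by simpa using norm_le_vnorm (Pi.single i (1 : k)) i)
  by_cases hna : IsNonarch k
  · have : Nonempty ι := ⟨i⟩
    unfold vnorm
    rw [if_pos hna]
    refine ciSup_le fun j => ?_
    rcases eq_or_ne j i with rfl | h <;> simp [*]
  · rw [← sq_le_one_iff₀ (vnorm_nonneg _), sq_vnorm_of_not_isNonarch hna,
      Finset.sum_eq_single i (fun j _ hj => by simp [hj]) (by simp)]
    simp

lemma vnorm_le_mul_of_forall_norm_le {C : ℝ} (hC : 0 ≤ C) {x y : ι → k}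
    (h : ∀ i, ‖x i‖ ≤ C * ‖y i‖) : vnorm x ≤ C * vnorm y := by
  by_cases hna : IsNonarch k
  · unfold vnorm
    rw [if_pos hna, if_pos hna]
    refine Real.iSup_le (fun i => (h i).trans <| mul_le_mul_of_nonneg_left
      (le_ciSup (f := fun j => ‖y j‖) (Set.finite_range _).bddAbove i) hC)
      (mul_nonneg hC (Real.iSup_nonneg fun i => norm_nonneg _))
  · rw [← pow_le_pow_iff_left₀ (vnorm_nonneg x) (mul_nonneg hC (vnorm_nonneg y)) two_ne_zero,
      mul_pow, sq_vnorm_of_not_isNonarch hna, sq_vnorm_of_not_isNonarch hna,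
      Finset.mul_sum]
    exact Finset.sum_le_sum fun i _ => by
      rw [← mul_pow]
      exact pow_le_pow_left₀ (norm_nonneg _) (h i) 2

lemma norm_sum_mul_le_vnorm_mul (c x : ι → k) : ‖∑ i, c i * x i‖ ≤ vnorm c * vnorm x := by
  by_cases hna : IsNonarch k
  · have := IsUltrametricDist.isUltrametricDist_of_forall_norm_add_le_max_norm hna
    refine IsUltrametricDist.norm_sum_le_of_forall_le_of_nonneg
      (mul_nonneg (vnorm_nonneg c) (vnorm_nonneg x)) fun j _ => ?_
    rw [norm_mul]
    exact mul_le_mul (norm_le_vnorm c j) (norm_le_vnorm x j) (norm_nonneg _) (vnorm_nonneg c)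
  · refine (norm_sum_le _ _).trans ?_
    simp only [norm_mul]
    refine (pow_le_pow_iff_left₀ (Finset.sum_nonneg fun i _ => by positivity)
      (mul_nonneg (vnorm_nonneg c) (vnorm_nonneg x)) two_ne_zero).mp ?_
    rw [mul_pow, sq_vnorm_of_not_isNonarch hna, sq_vnorm_of_not_isNonarch hna]
    exact Finset.sum_mul_sq_le_sq_mul_sq _ _ _

end VNorm

section Wedge

variable {k : Type*} [NontriviallyNormedField k] {d : ℕ}

lemma wnorm_congr {x y x' y' : Fin d → k}
    (h : ∀ p : Fin d × Fin d,
      ‖x p.1 * y p.2 - x p.2 * y p.1‖ = ‖x' p.1 * y' p.2 - x' p.2 * y' p.1‖) :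
    wnorm x y = wnorm x' y' := by
  unfold wnorm
  split_ifs
  · exact iSup_congr h
  · simp only [h]

lemma wnorm_comm (x y : Fin d → k) : wnorm x y = wnorm y x :=
  wnorm_congr fun p => by rw [← norm_neg]; ring_nf

lemma wnorm_add_smul_right (x y : Fin d → k) (t : k) : wnorm (x + t • y) y = wnorm x y :=
  wnorm_congr fun p => by simp only [Pi.add_apply, Pi.smul_apply, smul_eq_mul]; ring_nf

lemma wnorm_smul_left (a : k) (x y : Fin d → k) : wnorm (a • x) y = ‖a‖ * wnorm x y := by
  have h : ∀ p : Fin d × Fin d, ‖(a • x) p.1 * y p.2 - (a • x) p.2 * y p.1‖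
      = ‖a‖ * ‖x p.1 * y p.2 - x p.2 * y p.1‖ := fun p => by
    simp only [Pi.smul_apply, smul_eq_mul, ← norm_mul]
    ring_nf
  unfold wnorm
  split_ifs
  · rw [Real.mul_iSup_of_nonneg (norm_nonneg a)]
    exact iSup_congr h
  · rw [← Real.sqrt_sq (norm_nonneg a), ← Real.sqrt_mul (sq_nonneg _), Finset.mul_sum]
    refine congrArg _ (Finset.sum_congr rfl fun p _ => ?_)
    rw [h p]
    split_ifs <;> ring

lemma wnorm_smul_right (b : k) (x y : Fin d → k) : wnorm x (b • y) = ‖b‖ * wnorm x y := by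
  rw [wnorm_comm, wnorm_smul_left, wnorm_comm]

lemma wnorm_le_vnorm_mul_of_isNonarch (hna : IsNonarch k) (x y : Fin d → k) :
    wnorm x y ≤ vnorm x * vnorm y := by
  have hle : ∀ i j, ‖x i * y j‖ ≤ vnorm x * vnorm y := fun i j => by
    rw [norm_mul]
    exact mul_le_mul (norm_le_vnorm x i) (norm_le_vnorm y j) (norm_nonneg _) (vnorm_nonneg x)
  unfold wnorm
  rw [if_pos hna]
  refine Real.iSup_le (fun p => ?_) (mul_nonneg (vnorm_nonneg x) (vnorm_nonneg y))
  rw [sub_eq_add_neg]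
  exact (hna _ _).trans (max_le (hle _ _) ((norm_neg _).trans_le (hle _ _)))

lemma sum_sum_norm_sq_wedge {ι : Type*} [Fintype ι] {U V : ι → k} {S T : ℝ}
    (h : ∀ α β : k, ∑ i, ‖α * U i + β * V i‖ ^ 2 = ‖α‖ ^ 2 * S + ‖β‖ ^ 2 * T) :
    ∑ i, ∑ j, ‖U i * V j - U j * V i‖ ^ 2 = 2 * (S * T) := by
  have hU : ∑ i, ‖U i‖ ^ 2 = S := by simpa using h 1 0
  have hV : ∑ i, ‖V i‖ ^ 2 = T := by simpa using h 0 1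
  have hcol : ∀ j, ∑ i, ‖U i * V j - U j * V i‖ ^ 2 = ‖V j‖ ^ 2 * S + ‖U j‖ ^ 2 * T := by
    intro j
    rw [← norm_neg (U j), ← h]
    exact Finset.sum_congr rfl fun i _ => by ring_nf
  rw [Finset.sum_comm, Finset.sum_congr rfl fun j _ => hcol j, Finset.sum_add_distrib,
    ← Finset.sum_mul, ← Finset.sum_mul, hU, hV]
  ring

lemma sum_ite_lt_eq_half {ι : Type*} [Fintype ι] [LinearOrder ι] (f : ι × ι → ℝ)
    (hswap : ∀ p, f p.swap = f p) (hdiag : ∀ i, f (i, i) = 0) :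
    ∑ p, (if p.1 < p.2 then f p else 0) = (∑ p, f p) / 2 := by
  have hgt : ∑ p, (if p.2 < p.1 then f p else 0) = ∑ p, (if p.1 < p.2 then f p else 0) :=
    Fintype.sum_equiv (Equiv.prodComm ι ι) _ _ fun p => by simp [hswap]
  have hsplit : ∑ p, f p
      = ∑ p, (if p.1 < p.2 then f p else 0) + ∑ p, (if p.2 < p.1 then f p else 0) := by
    rw [← Finset.sum_add_distrib]
    refine Finset.sum_congr rfl fun p _ => ?_
    rcases lt_trichotomy p.1 p.2 with h | h | h
    · simp [h, h.not_gt]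
    · obtain ⟨i, j⟩ := p
      simp only at h
      simp [h, hdiag]
    · simp [h, h.not_gt]
  linarith

lemma wnorm_eq_sqrt_of_not_isNonarch (hna : ¬ IsNonarch k) {U V : Fin d → k} {S T : ℝ}
    (h : ∀ α β : k, ∑ i, ‖α * U i + β * V i‖ ^ 2 = ‖α‖ ^ 2 * S + ‖β‖ ^ 2 * T) :
    wnorm U V = √(S * T) := by
  unfold wnorm
  have hswap : ∀ p : Fin d × Fin d, ‖U p.2 * V p.1 - U p.1 * V p.2‖ ^ 2
      = ‖U p.1 * V p.2 - U p.2 * V p.1‖ ^ 2 := fun p => by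
    rw [norm_sub_rev]
  rw [if_neg hna, sum_ite_lt_eq_half _ hswap (by simp), Fintype.sum_prod_type,
    sum_sum_norm_sq_wedge h]
  ring_nf

end Wedge

section Projective

variable {k : Type*} [NontriviallyNormedField k] {d : ℕ}

lemma pdist_smul {a b : k} (ha : a ≠ 0) (hb : b ≠ 0) (x y : Fin d → k) :
    pdist (a • x) (b • y) = pdist x y := by
  unfold pdist
  rw [wnorm_smul_left, wnorm_smul_right, vnorm_smul, vnorm_smul,
    mul_mul_mul_comm, ← mul_assoc, mul_div_mul_left _ _
      (mul_ne_zero (norm_ne_zero_iff.mpr ha) (norm_ne_zero_iff.mpr hb))]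

lemma pdelta_mk {u v : Fin d → k} (hu : u ≠ 0) (hv : v ≠ 0) :
    pdelta (Projectivization.mk k u hu) (Projectivization.mk k v hv) = pdist u v := by
  obtain ⟨a, ha⟩ := (Projectivization.mk_eq_mk_iff k _ _
    (Projectivization.rep_nonzero _) hu).mp (Projectivization.mk_rep _)
  obtain ⟨b, hb⟩ := (Projectivization.mk_eq_mk_iff k _ _
    (Projectivization.rep_nonzero _) hv).mp (Projectivization.mk_rep _)
  unfold pdelta
  rw [← ha, ← hb, Units.smul_def, Units.smul_def, pdist_smul a.ne_zero b.ne_zero]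

lemma pact_eq_mk_rep (g : SLgp d k) (Q : Projectivization k (Fin d → k)) :
    pact g Q = Projectivization.mk k ((g : Matrix (Fin d) (Fin d) k) *ᵥ Q.rep)
      (sl_mulVec_ne_zero g Q.rep_nonzero) := by
  conv_lhs => rw [← Q.mk_rep]
  exact Projectivization.map_mk _ _ _ _

lemma pdeltaH_row (u : Matrix (Fin d) (Fin d) k) (i : Fin d)
    (Q : Projectivization k (Fin d → k)) :
    pdeltaH Q (fun j => u i j) = ‖(u *ᵥ Q.rep) i‖ / (vnorm (fun j => u i j) * vnorm Q.rep) :=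
  rfl

end Projective

section Isometry

variable {k : Type*} [NontriviallyNormedField k] {d : ℕ} {K : SLgp d k}

lemma one_le_vnorm_row (hK : K ∈ Kiso d k) (i : Fin d) :
    1 ≤ vnorm (fun j => (K : Matrix (Fin d) (Fin d) k) i j) := by
  set v : Fin d → k := ((K⁻¹ : SLgp d k) : Matrix (Fin d) (Fin d) k) *ᵥ Pi.single i 1
  have hKv : (K : Matrix (Fin d) (Fin d) k) *ᵥ v = Pi.single i 1 := by
    simp only [v, Matrix.mulVec_mulVec, ← Matrix.SpecialLinearGroup.coe_mul, mul_inv_cancel,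
      Matrix.SpecialLinearGroup.coe_one, Matrix.one_mulVec]
  have hv : vnorm v = 1 := by rw [← hK v, hKv, vnorm_single]
  have h := norm_sum_mul_le_vnorm_mul (fun j => (K : Matrix (Fin d) (Fin d) k) i j) v
  rwa [show (∑ j, (K : Matrix (Fin d) (Fin d) k) i j * v j) = 1 from
    congrFun hKv i |>.trans (Pi.single_eq_same i 1), norm_one, hv, mul_one] at h

lemma sum_norm_sq_smul_add_smul_single {w : Fin d → k} {i : Fin d} (hw : w i = 0) (α β : k) :
    ∑ j, ‖(α • w + β • Pi.single i 1 : Fin d → k) j‖ ^ 2 = ‖α‖ ^ 2 * ∑ j, ‖w j‖ ^ 2 + ‖β‖ ^ 2 := by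
  have hterm : ∀ j, ‖(α • w + β • Pi.single i 1 : Fin d → k) j‖ ^ 2
      = ‖α‖ ^ 2 * ‖w j‖ ^ 2 + if j = i then ‖β‖ ^ 2 else 0 := by
    intro j
    rcases eq_or_ne j i with rfl | h
    · simp [hw]
    · simp [h, norm_mul, mul_pow]
  simp only [hterm, Finset.sum_add_distrib, ← Finset.mul_sum, Finset.sum_ite_eq',
    Finset.mem_univ, if_true]

lemma wnorm_mulVec_single_le (hK : K ∈ Kiso d k) (i : Fin d) (z : Fin d → k) :
    wnorm ((K : Matrix (Fin d) (Fin d) k) *ᵥ z) ((K : Matrix (Fin d) (Fin d) k) *ᵥ Pi.single i 1)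
      ≤ vnorm (Function.update z i 0) := by
  set M : Matrix (Fin d) (Fin d) k := (K : Matrix (Fin d) (Fin d) k)
  set w := Function.update z i 0
  have hz : z = w + z i • Pi.single i 1 := by
    ext j
    rcases eq_or_ne j i with rfl | h <;> simp [w, *]
  have he : vnorm (M *ᵥ Pi.single i 1) = 1 := by rw [hK, vnorm_single]
  rw [hz, Matrix.mulVec_add, Matrix.mulVec_smul, wnorm_add_smul_right]
  by_cases hna : IsNonarch k
  · have h := wnorm_le_vnorm_mul_of_isNonarch hna (M *ᵥ w) (M *ᵥ Pi.single i 1)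
    rwa [hK w, he, mul_one] at h
  · refine le_of_eq ?_
    rw [wnorm_eq_sqrt_of_not_isNonarch hna (S := ∑ j, ‖w j‖ ^ 2) (T := 1), mul_one,
      ← sq_vnorm_of_not_isNonarch hna, Real.sqrt_sq (vnorm_nonneg w)]
    intro α β
    have hlin : (fun j => α * (M *ᵥ w) j + β * (M *ᵥ Pi.single i 1) j)
        = M *ᵥ (α • w + β • Pi.single i 1) := by
      rw [Matrix.mulVec_add, Matrix.mulVec_smul, Matrix.mulVec_smul]
      rfl
    rw [← sq_vnorm_of_not_isNonarch hna, hlin, hK, sq_vnorm_of_not_isNonarch hna,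
      sum_norm_sq_smul_add_smul_single (by simp [w]), mul_one]

lemma pdist_mulVec_single_le (hK : K ∈ Kiso d k) (i : Fin d) {z : Fin d → k} (hz : z i ≠ 0) :
    pdist ((K : Matrix (Fin d) (Fin d) k) *ᵥ z) ((K : Matrix (Fin d) (Fin d) k) *ᵥ Pi.single i 1)
      ≤ vnorm (Function.update z i 0) / ‖z i‖ := by
  unfold pdist
  rw [hK, hK, vnorm_single, mul_one]
  exact div_le_div₀ (vnorm_nonneg _) (wnorm_mulVec_single_le hK i z)
    (norm_pos_iff.mpr hz) (norm_le_vnorm z i)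

end Isometry

section Cartan

variable {k : Type*} [NontriviallyNormedField k] {d : ℕ}

lemma ne_zero_of_coe_eq_diagonal {A : SLgp d k} {a : Fin d → k}
    (hA : (A : Matrix (Fin d) (Fin d) k) = diagonal a) (i : Fin d) : a i ≠ 0 := by
  intro hi
  have hdet := A.det_coe
  rw [hA, det_diagonal, Finset.prod_eq_zero (Finset.mem_univ i) hi] at hdet
  exact zero_ne_one hdet

lemma pdelta_pact_le_of_cartan {g kk aa uu : SLgp d k} {a : Fin d → k}
    (hg : g = kk * aa * uu) (hkK : kk ∈ Kiso d k) (huK : uu ∈ Kiso d k)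
    (ha : (aa : Matrix (Fin d) (Fin d) k) = diagonal a) (i : Fin d) {B : ℝ} (hB : 0 ≤ B)
    (hBa : ∀ j ≠ i, ‖a j‖ ≤ B) (Q : Projectivization k (Fin d → k))
    (hQ : 0 < pdeltaH Q (fun j => (uu : Matrix (Fin d) (Fin d) k) i j)) :
    pdelta (pact g Q) (Projectivization.mk k ((kk : Matrix (Fin d) (Fin d) k) *ᵥ Pi.single i 1)
        (sl_mulVec_ne_zero kk (single_one_ne_zero i)))
      ≤ B / ‖a i‖ / pdeltaH Q (fun j => (uu : Matrix (Fin d) (Fin d) k) i j) := by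
  set c := fun j => (uu : Matrix (Fin d) (Fin d) k) i j
  set x := Q.rep
  set y := (uu : Matrix (Fin d) (Fin d) k) *ᵥ x
  set z := diagonal a *ᵥ y
  have hQc : pdeltaH Q c = ‖y i‖ / (vnorm c * vnorm x) := pdeltaH_row _ i Q
  have hyi : y i ≠ 0 := fun h => by
    rw [hQc, h, norm_zero, zero_div] at hQ
    exact lt_irrefl 0 hQ
  have hz : ∀ j, z j = a j * y j := mulVec_diagonal a y
  have hai : a i ≠ 0 := ne_zero_of_coe_eq_diagonal ha i
  have hgx : (g : Matrix (Fin d) (Fin d) k) *ᵥ x = (kk : Matrix (Fin d) (Fin d) k) *ᵥ z := by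
    simp only [z, y, hg, ← ha, Matrix.SpecialLinearGroup.coe_mul, Matrix.mulVec_mulVec,
      Matrix.mul_assoc]
  have hupdate : vnorm (Function.update z i 0) ≤ B * vnorm x := by
    rw [← huK x]
    refine vnorm_le_mul_of_forall_norm_le hB fun j => ?_
    rcases eq_or_ne j i with rfl | hj
    · simpa using mul_nonneg hB (norm_nonneg _)
    · rw [Function.update_of_ne hj, hz, norm_mul]
      exact mul_le_mul_of_nonneg_right (hBa j hj) (norm_nonneg _)
  rw [pact_eq_mk_rep, pdelta_mk, hgx, hQc]
  calc pdist ((kk : Matrix (Fin d) (Fin d) k) *ᵥ z)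
        ((kk : Matrix (Fin d) (Fin d) k) *ᵥ Pi.single i 1)
      ≤ vnorm (Function.update z i 0) / ‖z i‖ :=
        pdist_mulVec_single_le hkK i (by rw [hz]; exact mul_ne_zero hai hyi)
    _ ≤ B * vnorm x / (‖a i‖ * ‖y i‖) := by
        rw [hz, norm_mul]
        gcongr
    _ ≤ B * (vnorm c * vnorm x) / (‖a i‖ * ‖y i‖) := by
        gcongr
        exact le_mul_of_one_le_left (vnorm_nonneg x) (one_le_vnorm_row huK i)
    _ = B / ‖a i‖ / (‖y i‖ / (vnorm c * vnorm x)) := by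
        field_simp

end Cartan

/-- a gap `|a₂(g)/a₁(g)| ≤ ε²` in the Cartan decomposition
`g = k(g) a(g) u(g)` implies `ε`-contraction, with attracting point
`v_g = [k(g)e₁]` and repelling hyperplane `H_g = [span(u(g)⁻¹e₂, …, u(g)⁻¹e_d)]`,
i.e. the kernel of the form `u(g)⁻¹·e₁^*` (whose coordinate vector is the first
row of `u(g)`). -/
theorem statement_17
    {k : Type*} [NontriviallyNormedField k]
    {d : ℕ} (hd : 2 ≤ d)
    (g kk aa uu : SLgp d k) (avals : Fin d → k)
    (hdecomp : g = kk * aa * uu)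
    (hkK : kk ∈ Kiso d k) (huK : uu ∈ Kiso d k)
    (hdiag : (aa : Matrix (Fin d) (Fin d) k) = Matrix.diagonal avals)
    (hdec : ∀ i j : Fin d, i ≤ j → ‖avals j‖ ≤ ‖avals i‖)
    (ε : ℝ) (hε0 : 0 < ε)
    (hratio : ‖avals ⟨1, by omega⟩‖ ≤ ε ^ 2 * ‖avals ⟨0, by omega⟩‖)
    -- the coordinate vector of the form `u(g)⁻¹·e₁^*` cutting out `H_g`
    (c : Fin d → k)
    (hc : c = fun j => (uu : Matrix (Fin d) (Fin d) k) ⟨0, by omega⟩ j)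
    -- the attracting point `v_g = [k(g) e₁]`
    (vg : Projectivization k (Fin d → k))
    (hvg : vg = Projectivization.mk k
      ((kk : Matrix (Fin d) (Fin d) k).mulVec (Pi.single ⟨0, by omega⟩ 1))
      (sl_mulVec_ne_zero kk (single_one_ne_zero _))) :
    (∀ Q : Projectivization k (Fin d → k), ε < pdeltaH Q c →
      pdelta (pact g Q) vg ≤
        (‖avals ⟨1, by omega⟩‖ / ‖avals ⟨0, by omega⟩‖) / pdeltaH Q c ∧
      (‖avals ⟨1, by omega⟩‖ / ‖avals ⟨0, by omega⟩‖) / pdeltaH Q c < ε) ∧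
    EpsContractingSL g vg c ε := by
  have ha₀ : 0 < ‖avals ⟨0, by omega⟩‖ := norm_pos_iff.mpr (ne_zero_of_coe_eq_diagonal hdiag _)
  have hgap : ∀ j : Fin d, j ≠ ⟨0, by omega⟩ → ‖avals j‖ ≤ ‖avals ⟨1, by omega⟩‖ := fun j hj =>
    hdec _ j (Fin.le_def.mpr (Nat.one_le_iff_ne_zero.mpr fun h => hj (Fin.ext h)))
  have hbound : ∀ Q, ε < pdeltaH Q c → pdelta (pact g Q) vg ≤
      (‖avals ⟨1, by omega⟩‖ / ‖avals ⟨0, by omega⟩‖) / pdeltaH Q c := fun Q hQ => by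
    subst hc hvg
    exact pdelta_pact_le_of_cartan hdecomp hkK huK hdiag _ (norm_nonneg _) hgap Q (hε0.trans hQ)
  have hsmall : ∀ Q, ε < pdeltaH Q c →
      (‖avals ⟨1, by omega⟩‖ / ‖avals ⟨0, by omega⟩‖) / pdeltaH Q c < ε := fun Q hQ =>
    calc (‖avals ⟨1, by omega⟩‖ / ‖avals ⟨0, by omega⟩‖) / pdeltaH Q c
        ≤ ε ^ 2 / pdeltaH Q c := by
          gcongr
          · exact hε0.le.trans hQ.le
          · exact (div_le_iff₀ ha₀).mpr hratio
      _ < ε ^ 2 / ε := div_lt_div_of_pos_left (by positivity) hε0 hQ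
      _ = ε := by field_simp
  exact ⟨fun Q hQ => ⟨hbound Q hQ, hsmall Q hQ⟩, fun Q hQ => (hbound Q hQ).trans_lt (hsmall Q hQ)⟩
end

section
/- Let Γ be a subsemigroup of GL(V) acting irreducibly on V (no nonzero proper linear subspace of V is invariant under Γ) and contracting: there exist γ_n ∈ Γ and r_n ∈ k with ‖r_n γ_n‖ = 1 such that a subsequence of (r_n γ_n) converges in End(V) to a rank-one endomorphism. Then Γ contains a proximal element. -/
open Filter

noncomputable section

variable {k : Type*} [NontriviallyNormedField k]
  {V : Type*} [NormedAddCommGroup V] [NormedSpace k V]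

/-- `γ ∈ GL(V)` is proximal: it has an eigenvalue `lam ∈ k` with a one-dimensional
eigenline `L` and a `γ`-invariant complement `H`, such that the spectral radius
`lim ‖(γ|_H)ⁿ‖^{1/n}` of the restriction of `γ` to `H` is `< |lam|`. -/
def IsProximal (γ : V ≃L[k] V) : Prop :=
  ∃ (lam : k) (L H : Submodule k V),
    Module.finrank k L = 1 ∧
    (∀ v ∈ L, γ v = lam • v) ∧
    (∀ v ∈ H, γ v ∈ H) ∧
    IsCompl L H ∧
    ∃ (T : H →L[k] H) (ρ : ℝ),
      (∀ v : H, (T v : V) = γ v) ∧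
      Tendsto (fun n : ℕ => ‖T ^ n‖ ^ (1 / (n : ℝ))) atTop (nhds ρ) ∧
      ρ < ‖lam‖

end

/-!
Write the rank-one limit as `A = f.smulRight x₀`. By irreducibility some `g ∈ Γ` has
`c := f (g x₀) ≠ 0`, so `A ∘ g = c • ψ.smulRight x₀` with `ψ x₀ = 1`: it acts by `c` on its
image, a line complementary to its kernel `ker ψ`. Operators `S` near `A ∘ g` inherit this shape:
a contraction argument on the affine hyperplane `x₀ + ker ψ` gives an eigenvector of `S` near `x₀`
with eigenvalue near `c`, the same argument for the transpose gives an eigenfunctional near `ψ`,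
and on the kernel of that functional `S` has norm at most `3‖c‖/8`, below the modulus of the
eigenvalue. Since the norm of the restriction bounds its spectral radius, `γ * g ∈ Γ` is proximal
as soon as `r • γ ∘ g` is close enough to `A ∘ g`.
-/

open Topology

theorem Units.one_le_norm_pow_mul_norm_inv_pow {R : Type*} [NormedRing R] [Nontrivial R]
    (u : Rˣ) {n : ℕ} (hn : 0 < n) : 1 ≤ ‖(u : R) ^ n‖ * ‖(↑u⁻¹ : R)‖ ^ n :=
  calc (1 : ℝ) ≤ ‖((u ^ n * u⁻¹ ^ n : Rˣ) : R)‖ := by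
        rw [inv_pow, mul_inv_cancel, Units.val_one]; exact one_le_norm_one R
    _ ≤ ‖(u : R) ^ n‖ * ‖(↑u⁻¹ : R) ^ n‖ := by
        simpa only [Units.val_mul, Units.val_pow_eq_pow_val] using norm_mul_le _ _
    _ ≤ ‖(u : R) ^ n‖ * ‖(↑u⁻¹ : R)‖ ^ n :=
        mul_le_mul_of_nonneg_left (norm_pow_le' _ hn) (norm_nonneg _)

theorem Units.exists_tendsto_norm_pow_rpow_one_div {R : Type*} [NormedRing R] (u : Rˣ) :
    ∃ ρ : ℝ, Tendsto (fun n : ℕ => ‖(u : R) ^ n‖ ^ (1 / (n : ℝ))) atTop (𝓝 ρ) ∧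
      ρ ≤ ‖(u : R)‖ := by
  rcases subsingleton_or_nontrivial R with hR | hR
  · refine ⟨0, tendsto_const_nhds.congr' ?_, by simp [Subsingleton.elim (u : R) 0]⟩
    filter_upwards [eventually_ge_atTop 1] with n hn
    rw [Subsingleton.elim ((u : R) ^ n) 0, norm_zero, Real.zero_rpow (by positivity)]
  have hpos : ∀ n : ℕ, 0 < ‖(u : R) ^ n‖ := fun n =>
    norm_pos_iff.mpr (by rw [← Units.val_pow_eq_pow_val]; exact Units.ne_zero _)
  have hu' : 0 < ‖(↑u⁻¹ : R)‖ := norm_pos_iff.mpr (Units.ne_zero _)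
  set a : ℕ → ℝ := fun n => Real.log ‖(u : R) ^ n‖
  have hsub : Subadditive a := fun m n => by
    simp only [a]
    rw [← Real.log_mul (hpos m).ne' (hpos n).ne']
    exact Real.log_le_log (hpos _) (by rw [pow_add]; exact norm_mul_le _ _)
  have hbdd : BddBelow (Set.range fun n : ℕ => a n / n) := by
    refine ⟨min 0 (-Real.log ‖(↑u⁻¹ : R)‖), ?_⟩
    rintro _ ⟨n, rfl⟩
    rcases Nat.eq_zero_or_pos n with rfl | hn
    · simp
    refine (min_le_right _ _).trans ((le_div_iff₀ (by positivity)).mpr ?_)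
    have := Real.log_le_log one_pos (u.one_le_norm_pow_mul_norm_inv_pow hn)
    rw [Real.log_one, Real.log_mul (hpos n).ne' (by positivity), Real.log_pow] at this
    simp only [a]
    linarith
  refine ⟨Real.exp hsub.lim,
    ((Real.continuous_exp.tendsto _).comp (hsub.tendsto_lim hbdd)).congr' ?_, ?_⟩
  · filter_upwards [eventually_ge_atTop 1] with n hn
    rw [Function.comp_apply, Real.rpow_def_of_pos (hpos n), div_eq_mul_inv, one_div, mul_comm]
  · calc Real.exp hsub.lim ≤ Real.exp (a 1) :=
          Real.exp_le_exp.mpr (by simpa using hsub.lim_le_div hbdd one_ne_zero)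
      _ = ‖(u : R)‖ := by simp only [a, pow_one]; exact Real.exp_log (pow_one (u : R) ▸ hpos 1)

section DominantEigenline

variable {k : Type*} [NontriviallyNormedField k] {E : Type*} [NormedAddCommGroup E]
  [NormedSpace k E]

-- Proximality witnessed by a norm bound on the invariant complement `ker ψ` instead of by its
-- spectral radius; unlike the latter, this survives small perturbations.
def HasDominantEigenline (S : E →L[k] E) : Prop :=
  ∃ (v : E) (ψ : E →L[k] k) (lam μ : k) (M : ℝ),
    ψ v ≠ 0 ∧ S v = lam • v ∧ (∀ x, ψ (S x) = μ * ψ x) ∧ 0 ≤ M ∧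
      (∀ x, ψ x = 0 → ‖S x‖ ≤ M * ‖x‖) ∧ M < ‖lam‖

theorem HasDominantEigenline.smul {S : E →L[k] E} (h : HasDominantEigenline S) {r : k}
    (hr : r ≠ 0) : HasDominantEigenline (r • S) := by
  obtain ⟨v, ψ, lam, μ, M, hψv, hv, hψ, hM0, hM, hMlam⟩ := h
  refine ⟨v, ψ, r * lam, r * μ, ‖r‖ * M, hψv, ?_, fun x => ?_, by positivity, fun x hx => ?_, ?_⟩
  · simp [hv, smul_smul]
  · simp [hψ, mul_assoc]
  · rw [smul_apply, norm_smul, mul_assoc]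
    exact mul_le_mul_of_nonneg_left (hM x hx) (norm_nonneg r)
  · rw [norm_mul]
    exact mul_lt_mul_of_pos_left hMlam (norm_pos_iff.mpr hr)

theorem HasDominantEigenline.isProximal {γ : E ≃L[k] E}
    (h : HasDominantEigenline (γ : E →L[k] E)) : IsProximal γ := by
  obtain ⟨v, ψ, lam, μ, M, hψv, hv, hψ, hM0, hM, hMlam⟩ := h
  have hv0 : v ≠ 0 := by rintro rfl; simp at hψv
  have hμ : μ ≠ 0 := by
    rintro rfl
    exact hψv (by simpa using hψ (γ.symm v))
  set H := LinearMap.ker (ψ : E →ₗ[k] k)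
  have hmaps : ∀ x ∈ H, γ x ∈ H := fun x hx => by
    simp_all [H]
  have hmaps' : ∀ x ∈ H, γ.symm x ∈ H := fun x hx => by
    have := hψ (γ.symm x)
    simp_all [H]
  let T : H →L[k] H := (γ : E →L[k] E).restrict hmaps
  let u : (H →L[k] H)ˣ :=
    ⟨T, (γ.symm : E →L[k] E).restrict hmaps', ContinuousLinearMap.ext fun x =>
      Subtype.ext (γ.apply_symm_apply x), ContinuousLinearMap.ext fun x =>
      Subtype.ext (γ.symm_apply_apply x)⟩
  obtain ⟨ρ, hρ, hρT⟩ := u.exists_tendsto_norm_pow_rpow_one_div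
  have hψ_surj : Function.Surjective (ψ : E →ₗ[k] k) := fun t =>
    ⟨(t / ψ v) • v, by simp [hψv]⟩
  have hcompl : IsCompl (k ∙ v) H :=
    (Submodule.isCompl_span_singleton_of_isCoatom_of_notMem
      (LinearMap.isCoatom_ker_of_surjective hψ_surj) (by simpa [H] using hψv)).symm
  refine ⟨lam, k ∙ v, H, finrank_span_singleton hv0, fun x hx => ?_, hmaps, hcompl, T, ρ,
    fun _ => rfl, hρ, ?_⟩
  · obtain ⟨t, rfl⟩ := Submodule.mem_span_singleton.mp hx
    rw [map_smul, ← ContinuousLinearEquiv.coe_coe, hv, smul_comm]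
  · calc ρ ≤ ‖T‖ := hρT
      _ ≤ M := T.opNorm_le_bound hM0 fun x => hM x x.2
      _ < ‖lam‖ := hMlam

end DominantEigenline

section RankOnePerturbation

variable {k : Type*} [NontriviallyNormedField k] {E : Type*} [NormedAddCommGroup E]
  [NormedSpace k E] {c : k} {φ : E →L[k] k} {e : E}

-- With `D = S - c • φ.smulRight e`, a fixed point `h ∈ ker φ` of this map is exactly an `h` for
-- which `e + h` is an eigenvector of `S`, with eigenvalue `c + φ (D (e + h))`.
variable (c φ e) in
def eigenvectorCorrection (D : E →L[k] E) (h : E) : E :=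
  c⁻¹ • (D (e + h) - φ (D (e + h)) • (e + h))

theorem apply_eigenvectorCorrection (hφe : φ e = 1) (D : E →L[k] E) {h : E} (hh : φ h = 0) :
    φ (eigenvectorCorrection c φ e D h) = 0 := by
  simp [eigenvectorCorrection, hφe, hh]

theorem norm_eigenvectorCorrection_le (D : E →L[k] E) {h : E} (hh : ‖h‖ ≤ 1) :
    ‖eigenvectorCorrection c φ e D h‖ ≤ ‖c‖⁻¹ * (1 + ‖φ‖ * (‖e‖ + 1)) * (‖e‖ + 1) * ‖D‖ := by
  have hu : ‖e + h‖ ≤ ‖e‖ + 1 := (norm_add_le _ _).trans (by linarith)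
  have hy : ‖D (e + h)‖ ≤ ‖D‖ * (‖e‖ + 1) := D.le_of_opNorm_le le_rfl _ |>.trans (by gcongr)
  calc ‖eigenvectorCorrection c φ e D h‖
      ≤ ‖c‖⁻¹ * (‖D (e + h)‖ + ‖φ‖ * ‖D (e + h)‖ * ‖e + h‖) := by
        rw [eigenvectorCorrection, norm_smul, norm_inv]
        gcongr
        refine (norm_sub_le _ _).trans ?_
        rw [norm_smul]
        gcongr
        exact φ.le_opNorm _
    _ ≤ ‖c‖⁻¹ * (‖D‖ * (‖e‖ + 1) + ‖φ‖ * (‖D‖ * (‖e‖ + 1)) * (‖e‖ + 1)) := by gcongr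
    _ = ‖c‖⁻¹ * (1 + ‖φ‖ * (‖e‖ + 1)) * (‖e‖ + 1) * ‖D‖ := by ring

theorem norm_eigenvectorCorrection_sub_le (D : E →L[k] E) {h h' : E} (hh : ‖h‖ ≤ 1)
    (hh' : ‖h'‖ ≤ 1) :
    ‖eigenvectorCorrection c φ e D h - eigenvectorCorrection c φ e D h'‖ ≤
      ‖c‖⁻¹ * (1 + 2 * ‖φ‖ * (‖e‖ + 1)) * ‖D‖ * ‖h - h'‖ := by
  have hu : ‖e + h‖ ≤ ‖e‖ + 1 := (norm_add_le _ _).trans (by linarith)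
  have hu' : ‖e + h'‖ ≤ ‖e‖ + 1 := (norm_add_le _ _).trans (by linarith)
  have hφD : ∀ x, ‖φ (D x)‖ ≤ ‖φ‖ * (‖D‖ * ‖x‖) := fun x =>
    (φ.le_opNorm _).trans (by gcongr; exact D.le_opNorm x)
  have hsplit : eigenvectorCorrection c φ e D h - eigenvectorCorrection c φ e D h' =
      c⁻¹ • (D (h - h') - φ (D (h - h')) • (e + h) - φ (D (e + h')) • (h - h')) := by
    simp only [eigenvectorCorrection, map_add, map_sub]
    module
  calc ‖eigenvectorCorrection c φ e D h - eigenvectorCorrection c φ e D h'‖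
      ≤ ‖c‖⁻¹ * (‖D (h - h')‖ + ‖φ (D (h - h'))‖ * ‖e + h‖ + ‖φ (D (e + h'))‖ * ‖h - h'‖) := by
        rw [hsplit, norm_smul, norm_inv]
        gcongr
        refine (norm_sub_le _ _).trans (add_le_add ((norm_sub_le _ _).trans ?_) ?_) <;>
          simp only [norm_smul, le_refl]
    _ ≤ ‖c‖⁻¹ * (‖D‖ * ‖h - h'‖ + ‖φ‖ * (‖D‖ * ‖h - h'‖) * (‖e‖ + 1) +
          ‖φ‖ * (‖D‖ * (‖e‖ + 1)) * ‖h - h'‖) := by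
        gcongr
        · exact D.le_opNorm _
        · exact hφD _
        · exact (hφD _).trans (by gcongr)
    _ = ‖c‖⁻¹ * (1 + 2 * ‖φ‖ * (‖e‖ + 1)) * ‖D‖ * ‖h - h'‖ := by ring

theorem apply_add_eq_smul_of_isFixedPt (hφe : φ e = 1) (hc : c ≠ 0) (D : E →L[k] E) {h : E}
    (hh : φ h = 0) (hfix : Function.IsFixedPt (eigenvectorCorrection c φ e D) h) :
    (c • φ.smulRight e + D) (e + h) = (c + φ (D (e + h))) • (e + h) := by
  have hch : c • h = D (e + h) - φ (D (e + h)) • (e + h) :=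
    calc c • h = c • eigenvectorCorrection c φ e D h := by rw [hfix.eq]
      _ = _ := smul_inv_smul₀ hc _
  rw [add_apply, smul_apply, ContinuousLinearMap.smulRight_apply, map_add, hφe, hh, add_zero,
    one_smul, add_smul, smul_add c e h, hch]
  abel

variable [CompleteSpace E]

theorem exists_isFixedPt_eigenvectorCorrection (hφe : φ e = 1) (D : E →L[k] E)
    (hD : ‖c‖⁻¹ * (1 + 2 * ‖φ‖ * (‖e‖ + 1)) * (‖e‖ + 1) * ‖D‖ ≤ 1 / 2) :
    ∃ h, φ h = 0 ∧ ‖h‖ ≤ ‖c‖⁻¹ * (1 + 2 * ‖φ‖ * (‖e‖ + 1)) * (‖e‖ + 1) * ‖D‖ ∧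
      Function.IsFixedPt (eigenvectorCorrection c φ e D) h := by
  set F := eigenvectorCorrection c φ e D
  set s : Set E := {h | φ h = 0 ∧ ‖h‖ ≤ 1}
  have hs : IsClosed s :=
    (isClosed_eq φ.continuous continuous_const).inter (isClosed_le continuous_norm continuous_const)
  have hφ := norm_nonneg φ
  have he := norm_nonneg e
  have hbound : ∀ h, ‖h‖ ≤ 1 →
      ‖F h‖ ≤ ‖c‖⁻¹ * (1 + 2 * ‖φ‖ * (‖e‖ + 1)) * (‖e‖ + 1) * ‖D‖ := fun h hh =>
    (norm_eigenvectorCorrection_le D hh).trans (by gcongr; nlinarith)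
  have hmaps : Set.MapsTo F s s := fun h hh =>
    ⟨apply_eigenvectorCorrection hφe D hh.1, (hbound h hh.2).trans (by linarith)⟩
  have hcontr : ContractingWith (1 / 2) (hmaps.restrict F s s) := by
    refine ⟨by norm_num, hmaps.lipschitzOnWith_iff_restrict.mp
      (LipschitzOnWith.of_dist_le_mul fun x hx y hy => ?_)⟩
    have hκ : 0 ≤ ‖c‖⁻¹ * (1 + 2 * ‖φ‖ * (‖e‖ + 1)) * ‖D‖ := by positivity
    rw [dist_eq_norm, dist_eq_norm, NNReal.coe_div, NNReal.coe_one, NNReal.coe_two]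
    refine (norm_eigenvectorCorrection_sub_le D hx.2 hy.2).trans ?_
    gcongr
    nlinarith [mul_nonneg hκ he]
  obtain ⟨h, hh, hfix, -⟩ :=
    hcontr.exists_fixedPoint' hs.isComplete hmaps (x := 0) (by simp [s]) (edist_ne_top _ _)
  exact ⟨h, hh.1, hfix.eq ▸ hbound h hh.2, hfix⟩

theorem eventually_exists_eigenvector (hφe : φ e = 1) (hc : c ≠ 0) {ε : ℝ} (hε : 0 < ε) :
    ∀ᶠ S in 𝓝 (c • φ.smulRight e), ∃ (lam : k) (h : E),
      φ h = 0 ∧ ‖h‖ ≤ ε ∧ ‖lam - c‖ ≤ ε ∧ S (e + h) = lam • (e + h) := by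
  set B := c • φ.smulRight e
  have hsmall : ∀ K : ℝ, ∀ᶠ S in 𝓝 B, K * ‖S - B‖ ≤ min ε (1 / 2) := fun K => by
    have := (show Continuous fun S : E →L[k] E => K * ‖S - B‖ by fun_prop).tendsto B
    rw [sub_self, norm_zero, mul_zero] at this
    exact this.eventually (ge_mem_nhds (lt_min hε one_half_pos))
  filter_upwards [hsmall (‖c‖⁻¹ * (1 + 2 * ‖φ‖ * (‖e‖ + 1)) * (‖e‖ + 1)),
    hsmall (‖φ‖ * (‖e‖ + 1))] with S hκ hφS
  obtain ⟨h, hφh, hh, hfix⟩ :=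
    exists_isFixedPt_eigenvectorCorrection hφe (S - B) (hκ.trans (min_le_right _ _))
  have hh1 : ‖h‖ ≤ 1 := hh.trans ((hκ.trans (min_le_right _ _)).trans (by norm_num))
  refine ⟨c + φ ((S - B) (e + h)), h, hφh, hh.trans (hκ.trans (min_le_left _ _)), ?_, ?_⟩
  · rw [add_sub_cancel_left]
    calc ‖φ ((S - B) (e + h))‖ ≤ ‖φ‖ * (‖S - B‖ * ‖e + h‖) :=
          (φ.le_opNorm _).trans (by gcongr; exact (S - B).le_opNorm _)
      _ ≤ ‖φ‖ * (‖S - B‖ * (‖e‖ + 1)) := by gcongr; exact (norm_add_le _ _).trans (by linarith)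
      _ ≤ ε := by linarith [hφS.trans (min_le_left _ _)]
  · have := apply_add_eq_smul_of_isFixedPt hφe hc (S - B) hφh hfix
    rwa [show c • φ.smulRight e + (S - B) = S from add_sub_cancel B S] at this

end RankOnePerturbation

section Dominance

variable {k : Type*} [NontriviallyNormedField k] {E : Type*} [NormedAddCommGroup E]
  [NormedSpace k E] {c : k} {φ : E →L[k] k} {e : E}

variable (c e) in
theorem norm_apply_le_of_add_apply_eq_zero (S : E →L[k] E) {η : E →L[k] k} {x : E}
    (hx : (φ + η) x = 0) :
    ‖S x‖ ≤ (‖c‖ * ‖e‖ * ‖η‖ + ‖S - c • φ.smulRight e‖) * ‖x‖ := by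
  have hφx : φ x = -η x := eq_neg_of_add_eq_zero_left hx
  calc ‖S x‖ = ‖(c • φ.smulRight e) x + (S - c • φ.smulRight e) x‖ := by simp
    _ ≤ ‖c‖ * (‖η x‖ * ‖e‖) + ‖S - c • φ.smulRight e‖ * ‖x‖ := by
        refine (norm_add_le _ _).trans (add_le_add ?_ ((S - _).le_opNorm x))
        simp [norm_smul, hφx]
    _ ≤ ‖c‖ * ((‖η‖ * ‖x‖) * ‖e‖) + ‖S - c • φ.smulRight e‖ * ‖x‖ := by
        gcongr; exact η.le_opNorm x
    _ = (‖c‖ * ‖e‖ * ‖η‖ + ‖S - c • φ.smulRight e‖) * ‖x‖ := by ring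

variable [CompleteSpace k] [CompleteSpace E]

theorem eventually_hasDominantEigenline (hφe : φ e = 1) (hc : c ≠ 0) :
    ∀ᶠ S in 𝓝 (c • φ.smulRight e), HasDominantEigenline S := by
  have hc0 : 0 < ‖c‖ := norm_pos_iff.mpr hc
  -- chosen so that on the kernel of the perturbed eigenfunctional `‖S‖ ≤ ‖c‖/4 + ‖c‖/8`,
  -- while the perturbed eigenvalue has modulus `≥ ‖c‖/2`
  set ε : ℝ := 1 / (4 * (‖e‖ + 1))
  have hε : 0 < ε := by positivity
  have hεe : ‖e‖ * ε ≤ 1 / 4 := by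
    rw [mul_one_div, div_le_div_iff₀ (by positivity) (by norm_num)]; linarith
  have hε1 : ε ≤ 1 / 4 := by
    rw [one_div_le_one_div (by positivity) (by norm_num)]; linarith [norm_nonneg e]
  -- transposition `S ↦ (ψ ↦ ψ ∘ S)`: eigenvectors of `τ S` are eigenfunctionals of `S`
  let τ := (ContinuousLinearMap.compL k E E k).flip
  have hτB : τ (c • φ.smulRight e) = c • (ContinuousLinearMap.apply k k e).smulRight φ := by
    ext ψ x
    simp [τ, mul_comm]
  have hφe' : ContinuousLinearMap.apply k k e φ = 1 := hφe
  have hdual := (τ.continuous.tendsto _).eventually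
    (hτB ▸ eventually_exists_eigenvector hφe' hc hε)
  have hnear : ∀ᶠ S in 𝓝 (c • φ.smulRight e), ‖S - c • φ.smulRight e‖ ≤ ‖c‖ / 8 :=
    (tendsto_iff_norm_sub_tendsto_zero.mp tendsto_id).eventually (ge_mem_nhds (by positivity))
  filter_upwards [eventually_exists_eigenvector hφe hc (lt_min one_pos (half_pos hc0)), hdual,
    hnear] with S ⟨lam, h, hφh, hh, hlam, hS⟩ ⟨μ, η, hηe', hη, _, hSψ⟩ hSB
  have hηe : η e = 0 := hηe'
  refine ⟨e + h, φ + η, lam, μ, 3 / 8 * ‖c‖, ?_, hS, fun x => ?_, by positivity, fun x hx => ?_, ?_⟩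
  · have hηh : ‖η h‖ < 1 := (η.le_opNorm h).trans_lt <| by
      nlinarith [norm_nonneg η, norm_nonneg h, hh.trans (min_le_left _ _)]
    intro h0
    have : η h = -1 := by
      simp only [add_apply, map_add, hφe, hφh, hηe] at h0
      linear_combination h0
    simp [this] at hηh
  · simpa [τ, mul_add] using congrArg (· x) hSψ
  · refine (norm_apply_le_of_add_apply_eq_zero c e S hx).trans ?_
    gcongr
    have := mul_le_mul_of_nonneg_left ((mul_le_mul_of_nonneg_left hη (norm_nonneg e)).trans hεe)
      hc0.le
    linarith [mul_assoc ‖c‖ ‖e‖ ‖η‖]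
  · have := norm_sub_norm_le c lam
    rw [norm_sub_rev] at this
    linarith [hlam.trans (min_le_right _ _)]

end Dominance

theorem exists_mem_apply_apply_ne_zero_of_irreducible {R M N : Type*} [Semiring R]
    [AddCommMonoid M] [Module R M] [TopologicalSpace M] [AddCommMonoid N] [Module R N]
    {Γ : Set (M ≃L[R] M)}
    (hne : Γ.Nonempty) (hsemi : ∀ a ∈ Γ, ∀ b ∈ Γ, a * b ∈ Γ)
    (hirr : ∀ W : Submodule R M, W ≠ ⊥ → W ≠ ⊤ → ¬ ∀ g ∈ Γ, ∀ v ∈ W, g v ∈ W)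
    {x : M} (hx : x ≠ 0) {f : M →ₗ[R] N} (hf : f ≠ 0) : ∃ g ∈ Γ, f (g x) ≠ 0 := by
  by_contra! hcon
  set W := Submodule.span R {y | ∃ g ∈ Γ, g x = y}
  have hW : ∀ g ∈ Γ, ∀ v ∈ W, g v ∈ W := fun g hg v hv => by
    induction hv using Submodule.span_induction with
    | mem y hy =>
      obtain ⟨g', hg', rfl⟩ := hy
      exact Submodule.subset_span ⟨g * g', hsemi g hg g' hg', rfl⟩
    | zero => simp
    | add a b _ _ ha hb => simpa using W.add_mem ha hb
    | smul t a _ ha => simpa using W.smul_mem t ha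
  have hWbot : W ≠ ⊥ := fun hbot => by
    obtain ⟨g, hg⟩ := hne
    have : g x ∈ W := Submodule.subset_span ⟨g, hg, rfl⟩
    rw [hbot, Submodule.mem_bot, map_eq_zero_iff g g.injective] at this
    exact hx this
  have hWker : W ≤ LinearMap.ker f :=
    Submodule.span_le.mpr (by rintro _ ⟨g, hg, rfl⟩; exact hcon g hg)
  have hWtop : W = ⊤ := by_contra fun h => hirr W hWbot h hW
  exact hf (LinearMap.ext fun y => hWker (hWtop ▸ Submodule.mem_top))

theorem ContinuousLinearMap.exists_eq_smulRight_of_finrank_range_eq_one {k V W : Type*}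
    [NontriviallyNormedField k] [CompleteSpace k] [NormedAddCommGroup V] [NormedSpace k V]
    [FiniteDimensional k V] [NormedAddCommGroup W] [NormedSpace k W]
    (A : V →L[k] W) (hA : Module.finrank k (LinearMap.range (A : V →ₗ[k] W)) = 1) :
    ∃ (f : V →L[k] k) (w : W), w ≠ 0 ∧ f ≠ 0 ∧ A = f.smulRight w := by
  obtain ⟨⟨w, hwA⟩, hw0, hspan⟩ := finrank_eq_one_iff'.mp hA
  have hw : w ≠ 0 := fun h => hw0 (Subtype.ext h)
  obtain ⟨ξ, hξ⟩ : ∃ ξ : Module.Dual k W, ξ w ≠ 0 := by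
    by_contra! h
    exact hw ((Module.forall_dual_apply_eq_zero_iff k w).mp h)
  have hAx : ∀ x, ∃ t : k, A x = t • w := fun x => by
    obtain ⟨t, ht⟩ := hspan ⟨A x, LinearMap.mem_range_self _ x⟩
    exact ⟨t, (congrArg Subtype.val ht).symm⟩
  set f : V →L[k] k := LinearMap.toContinuousLinearMap ((ξ w)⁻¹ • ξ ∘ₗ (A : V →ₗ[k] W))
  have hA_eq : A = f.smulRight w := by
    ext x
    obtain ⟨t, ht⟩ := hAx x
    simp [f, ht, mul_comm t, inv_mul_cancel_left₀ hξ]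
  refine ⟨f, w, hw, fun hf => hw ?_, hA_eq⟩
  obtain ⟨x, hx⟩ := hwA
  simpa [hA_eq, hf] using hx.symm

theorem statement_19_general
    {k : Type*} [NontriviallyNormedField k] [CompleteSpace k]
    {V : Type*} [NormedAddCommGroup V] [NormedSpace k V] [FiniteDimensional k V]
    (Γ : Set (V ≃L[k] V))
    (hsemi : ∀ a ∈ Γ, ∀ b ∈ Γ, a * b ∈ Γ)
    -- Γ acts irreducibly
    (hirr : ∀ W : Submodule k V, W ≠ ⊥ → W ≠ ⊤ → ¬ ∀ g ∈ Γ, ∀ v ∈ W, g v ∈ W)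
    -- Γ is contracting
    (hcontr : ∃ (γ : ℕ → V ≃L[k] V) (r : ℕ → k) (φ : ℕ → ℕ) (A : V →L[k] V),
      (∀ n, γ n ∈ Γ) ∧
      (∀ n, ‖r n • ((γ n : V ≃L[k] V) : V →L[k] V)‖ = 1) ∧
      StrictMono φ ∧
      Tendsto (fun n => r (φ n) • ((γ (φ n) : V ≃L[k] V) : V →L[k] V)) atTop (nhds A) ∧
      Module.finrank k (LinearMap.range (A : V →ₗ[k] V)) = 1) :
    ∃ γ ∈ Γ, IsProximal γ := by
  obtain ⟨γ, r, φ, A, hγΓ, hnorm, -, hlim, hrank⟩ := hcontr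
  have := FiniteDimensional.complete k V
  obtain ⟨f, x₀, hx₀, hf, rfl⟩ := A.exists_eq_smulRight_of_finrank_range_eq_one hrank
  obtain ⟨g, hg, hc⟩ := exists_mem_apply_apply_ne_zero_of_irreducible ⟨γ 0, hγΓ 0⟩ hsemi hirr hx₀
    (f := (f : V →ₗ[k] k)) (by exact_mod_cast hf)
  set c := f (g x₀)
  replace hc : c ≠ 0 := hc
  set ψ := c⁻¹ • f.comp (g : V →L[k] V)
  have hψ : ψ x₀ = 1 := by simp [ψ, c, inv_mul_cancel₀ hc]
  have hB : (f.smulRight x₀).comp (g : V →L[k] V) = c • ψ.smulRight x₀ := by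
    ext x
    simp [ψ, smul_smul, mul_inv_cancel_left₀ hc]
  have hlim_g : Tendsto (fun n => (r (φ n) • (γ (φ n) : V →L[k] V)).comp (g : V →L[k] V)) atTop
      (𝓝 (c • ψ.smulRight x₀)) :=
    hB ▸ ((continuous_id.clm_comp_const (g : V →L[k] V)).tendsto _).comp hlim
  obtain ⟨n, hn⟩ := (hlim_g.eventually (eventually_hasDominantEigenline hψ hc)).exists
  have hr : r (φ n) ≠ 0 := fun h0 => by simpa [h0] using hnorm (φ n)
  refine ⟨γ (φ n) * g, hsemi _ (hγΓ _) g hg, HasDominantEigenline.isProximal ?_⟩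
  convert hn.smul (inv_ne_zero hr) using 1
  ext x
  simp [smul_smul, inv_mul_cancel₀ hr]

/-- an irreducible contracting subsemigroup of `GL(V)` contains a
proximal element. -/
theorem statement_19
    {k : Type*} [NontriviallyNormedField k] [CompleteSpace k] [LocallyCompactSpace k]
    {V : Type*} [NormedAddCommGroup V] [NormedSpace k V] [FiniteDimensional k V]
    (hdim : 2 ≤ Module.finrank k V)
    (Γ : Set (V ≃L[k] V))
    (hsemi : ∀ a ∈ Γ, ∀ b ∈ Γ, a * b ∈ Γ)
    -- Γ acts irreducibly
    (hirr : ∀ W : Submodule k V, W ≠ ⊥ → W ≠ ⊤ → ¬ ∀ g ∈ Γ, ∀ v ∈ W, g v ∈ W)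
    -- Γ is contracting
    (hcontr : ∃ (γ : ℕ → V ≃L[k] V) (r : ℕ → k) (φ : ℕ → ℕ) (A : V →L[k] V),
      (∀ n, γ n ∈ Γ) ∧
      (∀ n, ‖r n • ((γ n : V ≃L[k] V) : V →L[k] V)‖ = 1) ∧
      StrictMono φ ∧
      Tendsto (fun n => r (φ n) • ((γ (φ n) : V ≃L[k] V) : V →L[k] V)) atTop (nhds A) ∧
      Module.finrank k (LinearMap.range (A : V →ₗ[k] V)) = 1) :
    ∃ γ ∈ Γ, IsProximal γ :=
  statement_19_general Γ hsemi hirr hcontr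
end
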